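/- arXiv:2401.09400 — 2 statements merged into one kernel-verified Lean document; each statement's English description precedes it below -/
import Mathlib

section
/- For a cosimplicial vector space A (a functor from the simplex category to vector spaces), the matching map s : A^n → M^n A into the n-th matching object (the limit over surjections [n] ↠ [k] with k = n-1 or n-2) is surjective for every n. -/
open CategoryTheory Simplicial

/-! The matching family is determined by its values `aᵢ = x(σⁱ)` on the codegeneracies, since
every surjection `[n] ↠ [n - 2]` factors as `σⁱ ≫ σʲ`, and these values satisfy the relations
`sᵖ a_{q+1} = s^q a_p` for `p ≤ q`. A lift `y` with `sⁱ y = aᵢ` is built one index at a time: if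
`y` works for all indices `< j`, replace it by `y + dʲ⁺¹ (aⱼ - sʲ y)`. The coface `dʲ⁺¹` is a
section of `sʲ`, and for `i < j` the cosimplicial identities and the relations show that `sⁱ`
kills the correction. -/

theorem SimplexCategory.eq_σ_comp_σ_of_epi {m : ℕ} (θ : ⦋m + 2⦌ ⟶ ⦋m⦌) [Epi θ] :
    ∃ (i : Fin (m + 2)) (j : Fin (m + 1)), θ = σ i ≫ σ j := by
  obtain ⟨i, θ', rfl⟩ := eq_σ_comp_of_not_injective θ (by
    rw [← mono_iff_injective]
    intro
    have := le_of_mono θ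
    omega)
  have := epi_of_epi (σ i) θ'
  obtain ⟨j, rfl⟩ := eq_σ_of_epi θ'
  exact ⟨i, j, rfl⟩

namespace CategoryTheory.CosimplicialObject

variable {R : Type*} [Ring R] (A : CosimplicialObject (ModuleCat R)) {m : ℕ}

def IsMatchingTuple (a : Fin (m + 2) → A.obj ⦋m + 1⦌) : Prop :=
  ∀ p q : Fin (m + 1), p ≤ q → A.σ p (a q.succ) = A.σ q (a p.castSucc)

variable {A} {a : Fin (m + 2) → A.obj ⦋m + 1⦌}

theorem IsMatchingTuple.σ_δ_sub_eq_zero (ha : A.IsMatchingTuple a) {i j : Fin (m + 2)}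
    (hij : i < j) {y : A.obj ⦋m + 2⦌} (hy : A.σ i y = a i) :
    A.σ i (A.δ j.succ (a j - A.σ j y)) = 0 := by
  obtain ⟨q, rfl⟩ := Fin.exists_succ_eq.mpr (Fin.ne_zero_of_lt hij)
  obtain ⟨p, rfl⟩ := Fin.exists_castSucc_eq.mpr (Fin.ne_last_of_lt hij)
  have hpq : p ≤ q := Fin.castSucc_lt_succ_iff.mp hij
  have hσσ : A.σ p (A.σ q.succ y) = A.σ q (a p.castSucc) := by
    rw [← hy, ← comp_apply, ← comp_apply, A.σ_comp_σ hpq]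
  rw [← comp_apply, A.δ_comp_σ_of_gt hij, comp_apply, map_sub, ha p q hpq, hσσ, sub_self,
    map_zero]

theorem IsMatchingTuple.exists_σ_eq_of_lt (ha : A.IsMatchingTuple a) {t : ℕ} (ht : t ≤ m + 2) :
    ∃ y : A.obj ⦋m + 2⦌, ∀ i : Fin (m + 2), (i : ℕ) < t → A.σ i y = a i := by
  induction t with
  | zero => exact ⟨0, fun i hi => absurd hi (Nat.not_lt_zero _)⟩
  | succ t ih =>
    obtain ⟨y, hy⟩ := ih (by omega)
    let j : Fin (m + 2) := ⟨t, by omega⟩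
    refine ⟨y + A.δ j.succ (a j - A.σ j y), fun i hi => ?_⟩
    rw [map_add]
    obtain hit | rfl : (i : ℕ) < t ∨ i = j := by grind
    · rw [hy i hit, ha.σ_δ_sub_eq_zero (Fin.lt_def.mpr hit) (hy i hit), add_zero]
    · rw [← comp_apply, A.δ_comp_σ_succ, id_apply, add_sub_cancel]

theorem IsMatchingTuple.exists_σ_eq (ha : A.IsMatchingTuple a) :
    ∃ y : A.obj ⦋m + 2⦌, ∀ i, A.σ i y = a i :=
  (ha.exists_σ_eq_of_lt le_rfl).imp fun _ hy i => hy i i.isLt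

end CategoryTheory.CosimplicialObject

theorem cosimplicial_vector_space_matching_map_surjective
    (A : CosimplicialObject (ModuleCat ℝ)) (n : ℕ)
    (x : ∀ (k : ℕ), k < n → (k = n - 1 ∨ k = n - 2) →
      ∀ (σ : (⦋n⦌ : SimplexCategory) ⟶ ⦋k⦌), Function.Surjective σ.toOrderHom → A.obj ⦋k⦌)
    (compat : ∀ (k l : ℕ) (hk : k < n) (hk' : k = n - 1 ∨ k = n - 2)
      (hl : l < n) (hl' : l = n - 1 ∨ l = n - 2)
      (σ : (⦋n⦌ : SimplexCategory) ⟶ ⦋k⦌) (hσ : Function.Surjective σ.toOrderHom)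
      (τ : (⦋k⦌ : SimplexCategory) ⟶ ⦋l⦌) (hτ : Function.Surjective τ.toOrderHom)
      (hστ : Function.Surjective (σ ≫ τ).toOrderHom),
      x l hl hl' (σ ≫ τ) hστ = A.map τ (x k hk hk' σ hσ)) :
    ∃ y : A.obj ⦋n⦌, ∀ (k : ℕ) (hk : k < n) (hk' : k = n - 1 ∨ k = n - 2)
      (σ : (⦋n⦌ : SimplexCategory) ⟶ ⦋k⦌) (hσ : Function.Surjective σ.toOrderHom),
      x k hk hk' σ hσ = A.map σ y := by
  have hepi {a b : SimplexCategory} (f : a ⟶ b) [Epi f] : Function.Surjective f.toOrderHom :=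
    SimplexCategory.epi_iff_surjective.mp ‹_›
  obtain _ | _ | m := n
  · exact ⟨0, fun k hk => absurd hk k.not_lt_zero⟩
  · refine ⟨A.δ 0 (x 0 zero_lt_one (Or.inl rfl) (SimplexCategory.σ 0) (hepi _)), ?_⟩
    rintro k hk hk' θ hθ
    obtain rfl : k = 0 := by omega
    obtain rfl : θ = SimplexCategory.σ 0 := SimplexCategory.isTerminalZero.hom_ext _ _
    change _ = A.σ 0 (A.δ 0 _)
    rw [← comp_apply, A.δ_comp_σ_self' (j := 0) (i := 0) rfl, id_apply]
  · let a (i : Fin (m + 2)) : A.obj ⦋m + 1⦌ :=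
      x (m + 1) (by omega) (Or.inl rfl) (SimplexCategory.σ i) (hepi _)
    have compat_σ (i : Fin (m + 2)) (τ : ⦋m + 1⦌ ⟶ ⦋m⦌) [Epi τ] :=
      compat (m + 1) m (by omega) (Or.inl rfl) (by omega) (Or.inr rfl) (SimplexCategory.σ i)
        (hepi _) τ (hepi _) (hepi _)
    have ha : A.IsMatchingTuple a := fun p q hpq => by
      have h := compat_σ p.castSucc (SimplexCategory.σ q)
      simp only [SimplexCategory.σ_comp_σ hpq] at h
      exact (compat_σ q.succ (SimplexCategory.σ p)).symm.trans h
    obtain ⟨y, hy⟩ := ha.exists_σ_eq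
    refine ⟨y, fun k hk hk' θ hθ => ?_⟩
    have : Epi θ := SimplexCategory.epi_iff_surjective.mpr hθ
    obtain rfl | rfl : k = m + 1 ∨ m = k := by omega
    · obtain ⟨i, rfl⟩ := SimplexCategory.eq_σ_of_epi θ
      exact (hy i).symm
    · obtain ⟨i, j, rfl⟩ := SimplexCategory.eq_σ_comp_σ_of_epi θ
      rw [compat_σ i, A.map_comp, comp_apply]
      exact congrArg (A.σ j) (hy i).symm
end

section
/- Every cosimplicial chain complex (of non-negatively graded chain complexes of real vector spaces) is Reedy fibrant with respect to the projective model structure on chain complexes, i.e. for every n the matching map C^n → M^n C is a degreewise surjection in positive degrees. -/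
/-!
Matching objects are computed degreewise, so it suffices to solve the matching problem for the
cosimplicial vector space `X = C(-)_q`. Every surjection `[n] ↠ [n-2]` factors through a
codegeneracy, so a matching family is determined by its values `xᵢ` on the codegeneracies
`σᵢ : [n] ↠ [n-1]`, subject to the cosimplicial identities `σᵢ x_{j+1} = σⱼ xᵢ` for `i ≤ j`.
A lift is built one codegeneracy at a time: `y_{r+1} = y_r + δ_{r+1} (x_r - σ_r y_r)` has
`σ_r y_{r+1} = x_r` because `σ_r δ_{r+1} = 𝟙`, and keeps `σᵢ y_{r+1} = xᵢ` for `i < r` because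
`σᵢ δ_{r+1} = δ_r σᵢ` and `σᵢ (x_r - σ_r y_r) = σ_{r-1} (xᵢ - σᵢ y_r) = 0`.
-/

open CategoryTheory Simplicial

namespace CategoryTheory.CosimplicialObject

variable {R : Type*} [Ring R] {X : CosimplicialObject (ModuleCat R)} {m : ℕ}

variable (X) in
noncomputable def partialLift (x : Fin (m + 2) → X ^⦋m + 1⦌) (r : ℕ) : X ^⦋m + 2⦌ :=
  match r with
  | 0 => 0
  | r + 1 =>
    if h : r < m + 2 then
      let y := partialLift x r
      y + X.δ (Fin.succ ⟨r, h⟩) (x ⟨r, h⟩ - X.σ ⟨r, h⟩ y)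
    else partialLift x r

lemma σ_add_δ_succ (k : Fin (m + 2)) (y : X ^⦋m + 2⦌) (z : X ^⦋m + 1⦌) :
    X.σ k (y + X.δ k.succ (z - X.σ k y)) = z := by
  rw [map_add, ← comp_apply, δ_comp_σ_succ, ModuleCat.id_apply, add_sub_cancel]

lemma σ_castSucc_add_δ_succ_succ (x : Fin (m + 2) → X ^⦋m + 1⦌)
    (hx : ∀ i j : Fin (m + 1), i ≤ j → X.σ i (x j.succ) = X.σ j (x i.castSucc))
    {i j : Fin (m + 1)} (hij : i ≤ j) (y : X ^⦋m + 2⦌) (hy : X.σ i.castSucc y = x i.castSucc) :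
    X.σ i.castSucc (y + X.δ j.succ.succ (x j.succ - X.σ j.succ y)) = x i.castSucc := by
  have hzero : X.σ i (x j.succ - X.σ j.succ y) = 0 := by
    rw [map_sub, hx i j hij, ← comp_apply, ← X.σ_comp_σ hij, comp_apply, hy, sub_self]
  rw [map_add, ← comp_apply, X.δ_comp_σ_of_gt (Fin.castSucc_lt_succ_iff.mpr hij), comp_apply,
    hzero, map_zero, add_zero, hy]

lemma σ_partialLift (x : Fin (m + 2) → X ^⦋m + 1⦌)
    (hx : ∀ i j : Fin (m + 1), i ≤ j → X.σ i (x j.succ) = X.σ j (x i.castSucc))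
    {r : ℕ} (hr : r ≤ m + 2) (i : Fin (m + 2)) (hi : (i : ℕ) < r) :
    X.σ i (X.partialLift x r) = x i := by
  induction r with
  | zero => exact absurd hi (Nat.not_lt_zero _)
  | succ r ih =>
    have hr' : r < m + 2 := hr
    rw [partialLift, dif_pos hr']
    obtain hik | rfl := (Nat.lt_succ_iff.mp hi).lt_or_eq
    · replace hik : i < ⟨r, hr'⟩ := hik
      obtain ⟨i, rfl⟩ := Fin.exists_castSucc_eq.mpr (Fin.ne_last_of_lt hik)
      obtain ⟨j, hj⟩ := Fin.exists_succ_eq.mpr (Fin.ne_zero_of_lt hik)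
      have hy := ih hr'.le hik
      rw [← hj] at hik ⊢
      exact σ_castSucc_add_δ_succ_succ x hx (Fin.castSucc_lt_succ_iff.mp hik) _ hy
    · exact σ_add_δ_succ _ _ _

theorem exists_σ_eq (x : Fin (m + 2) → X ^⦋m + 1⦌)
    (hx : ∀ i j : Fin (m + 1), i ≤ j → X.σ i (x j.succ) = X.σ j (x i.castSucc)) :
    ∃ y : X ^⦋m + 2⦌, ∀ i, X.σ i y = x i :=
  ⟨X.partialLift x (m + 2), fun i => σ_partialLift x hx le_rfl i i.isLt⟩

end CategoryTheory.CosimplicialObject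

namespace SimplexCategory

lemma exists_eq_σ_comp_of_epi {n k : ℕ} (f : ⦋n + 1⦌ ⟶ ⦋k⦌) [Epi f] (hk : k ≤ n) :
    ∃ (i : Fin (n + 1)) (g : ⦋n⦌ ⟶ ⦋k⦌), Epi g ∧ f = σ i ≫ g := by
  have hf : ¬ Function.Injective f.toOrderHom := fun hinj => by
    have : Mono f := mono_iff_injective.mpr hinj
    have := le_of_mono f
    omega
  obtain ⟨i, g, rfl⟩ := eq_σ_comp_of_not_injective f hf
  exact ⟨i, g, epi_of_epi (σ i) g, rfl⟩

end SimplexCategory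

open SimplexCategory in
theorem cosimplicial_chain_complex_reedy_fibrant_general
    (C : CosimplicialObject (ChainComplex (ModuleCat ℝ) ℕ)) (n : ℕ) (q : ℕ)
    (x : ∀ (k : ℕ), k < n → (k = n - 1 ∨ k = n - 2) →
      ∀ (σ : (⦋n⦌ : SimplexCategory) ⟶ ⦋k⦌), Function.Surjective σ.toOrderHom →
        (C.obj ⦋k⦌).X q)
    (compat : ∀ (k l : ℕ) (hk : k < n) (hk' : k = n - 1 ∨ k = n - 2)
      (hl : l < n) (hl' : l = n - 1 ∨ l = n - 2)
      (σ : (⦋n⦌ : SimplexCategory) ⟶ ⦋k⦌) (hσ : Function.Surjective σ.toOrderHom)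
      (τ : (⦋k⦌ : SimplexCategory) ⟶ ⦋l⦌) (hτ : Function.Surjective τ.toOrderHom)
      (hστ : Function.Surjective (σ ≫ τ).toOrderHom),
      x l hl hl' (σ ≫ τ) hστ = (C.map τ).f q (x k hk hk' σ hσ)) :
    ∃ y : (C.obj ⦋n⦌).X q, ∀ (k : ℕ) (hk : k < n) (hk' : k = n - 1 ∨ k = n - 2)
      (σ : (⦋n⦌ : SimplexCategory) ⟶ ⦋k⦌) (hσ : Function.Surjective σ.toOrderHom),
      x k hk hk' σ hσ = (C.map σ).f q y := by
  have surj {a b : ℕ} (f : ⦋a⦌ ⟶ ⦋b⦌) [Epi f] : Function.Surjective f.toOrderHom :=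
    epi_iff_surjective.mp ‹_›
  let X : CosimplicialObject (ModuleCat ℝ) := C ⋙ HomologicalComplex.eval _ _ q
  rcases n with _ | _ | m
  · exact ⟨0, fun k hk => absurd hk k.not_lt_zero⟩
  · refine ⟨X.δ 0 (x 0 one_pos (Or.inl rfl) (σ 0) (surj _)), ?_⟩
    rintro k hk - f -
    obtain rfl : k = 0 := by omega
    obtain rfl : f = σ 0 := Subsingleton.elim _ _
    exact (ConcreteCategory.congr_hom X.δ_comp_σ_self _).symm
  · have x_congr {k hk hk'} {f g : ⦋m + 2⦌ ⟶ ⦋k⦌} (hfg : f = g) hf hg :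
        x k hk hk' f hf = x k hk hk' g hg := by subst hfg; rfl
    let x' (i : Fin (m + 2)) : X ^⦋m + 1⦌ := x (m + 1) (by omega) (Or.inl rfl) (σ i) (surj _)
    have hx' (i j : Fin (m + 1)) (hij : i ≤ j) : X.σ i (x' j.succ) = X.σ j (x' i.castSucc) := by
      have hm : m < m + 2 := by omega
      exact (compat _ m _ _ hm (Or.inr rfl) (σ j.succ) _ (σ i) (surj _) (surj _)).symm.trans
        ((x_congr (σ_comp_σ hij).symm _ _).trans
          (compat _ m _ _ hm (Or.inr rfl) (σ i.castSucc) _ (σ j) (surj _) (surj _)))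
    obtain ⟨y, hy⟩ := X.exists_σ_eq x' hx'
    refine ⟨y, fun k hk hk' f hf => ?_⟩
    have : Epi f := epi_iff_surjective.mpr hf
    obtain rfl | rfl : m + 1 = k ∨ m = k := by omega
    · obtain ⟨i, rfl⟩ := eq_σ_of_epi f
      exact (hy i).symm
    · obtain ⟨i, g, hg, rfl⟩ := exists_eq_σ_comp_of_epi f m.le_succ
      rw [compat (m + 1) m _ _ _ _ (σ i) (surj _) g (surj g) hf]
      change X.map g (x' i) = X.map (σ i ≫ g) y
      rw [← hy i, X.map_comp, comp_apply]
      rfl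

theorem cosimplicial_chain_complex_reedy_fibrant
    (C : CosimplicialObject (ChainComplex (ModuleCat ℝ) ℕ)) (n : ℕ) (q : ℕ) (hq : 0 < q)
    (x : ∀ (k : ℕ), k < n → (k = n - 1 ∨ k = n - 2) →
      ∀ (σ : (⦋n⦌ : SimplexCategory) ⟶ ⦋k⦌), Function.Surjective σ.toOrderHom →
        (C.obj ⦋k⦌).X q)
    (compat : ∀ (k l : ℕ) (hk : k < n) (hk' : k = n - 1 ∨ k = n - 2)
      (hl : l < n) (hl' : l = n - 1 ∨ l = n - 2)
      (σ : (⦋n⦌ : SimplexCategory) ⟶ ⦋k⦌) (hσ : Function.Surjective σ.toOrderHom)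
      (τ : (⦋k⦌ : SimplexCategory) ⟶ ⦋l⦌) (hτ : Function.Surjective τ.toOrderHom)
      (hστ : Function.Surjective (σ ≫ τ).toOrderHom),
      x l hl hl' (σ ≫ τ) hστ = (C.map τ).f q (x k hk hk' σ hσ)) :
    ∃ y : (C.obj ⦋n⦌).X q, ∀ (k : ℕ) (hk : k < n) (hk' : k = n - 1 ∨ k = n - 2)
      (σ : (⦋n⦌ : SimplexCategory) ⟶ ⦋k⦌) (hσ : Function.Surjective σ.toOrderHom),
      x k hk hk' σ hσ = (C.map σ).f q y :=
  cosimplicial_chain_complex_reedy_fibrant_general C n q x compat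
end
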